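/- Let k ≥ 2 and, for each i = 2,…,k, let A_i be an i-th order 2n-dimensional cubical tensor that is a Hamiltonian cubical tensor (equivalently, J A_i is supersymmetric). Then there exist supersymmetric tensors B_i (of order i and dimension 2n, for i = 2,…,k) such that, setting H(x) = ∑_{i=2}^k B_i x^i, the polynomial vector field satisfies ∑_{i=2}^k A_i x^{i−1} = J ∇H(x) for all x ∈ ℝ^{2n}; that is, the polynomial system ẋ = ∑_{i=2}^k A_i x^{i−1} is a Hamiltonian system with polynomial Hamiltonian H. -/

import Mathlib

open Finset Matrix

/-- A `k`-th order cubical tensor with index set `ι` (entries `A i₁ … i_k ∈ ℝ`,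
encoded as a function on index tuples). -/
abbrev Tensor (k : ℕ) (ι : Type) : Type := (Fin k → ι) → ℝ

/-- The transpose `A^{⊤_σ}` of a tensor `A` associated with a permutation `σ`:
`(A^{⊤_σ})_{i_{σ(1)} … i_{σ(k)}} = A_{i_1 … i_k}`. -/
def tTranspose {k : ℕ} {ι : Type} (σ : Equiv.Perm (Fin k)) (A : Tensor k ι) : Tensor k ι :=
  fun i => A (i ∘ σ)

/-- A cubical tensor is supersymmetric if its entries are invariant under any
permutation of the indices. -/
def IsSupersymmetric {k : ℕ} {ι : Type} (A : Tensor k ι) : Prop :=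
  ∀ σ : Equiv.Perm (Fin k), tTranspose σ A = A

/-- The scalar `A x^k = ∑_{i_1,…,i_k} A_{i_1…i_k} x_{i_1} ⋯ x_{i_k}`. -/
def tPow {k : ℕ} {ι : Type} [Fintype ι] (A : Tensor k ι) (x : ι → ℝ) : ℝ :=
  ∑ i : Fin k → ι, A i * ∏ t, x (i t)

/-- The vector `A x^{k-1}` (here the tensor has order `k+1`):
`(A x^k)_a = ∑_{i_2,…,i_{k+1}} A_{a i_2 … i_{k+1}} x_{i_2} ⋯ x_{i_{k+1}}`. -/
def tVec {k : ℕ} {ι : Type} [Fintype ι] (A : Tensor (k + 1) ι) (x : ι → ℝ) : ι → ℝ :=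
  fun a => ∑ i : Fin k → ι, A (Fin.cons a i) * ∏ t, x (i t)

/-- The matrix `A x^{k-2}` (here the tensor has order `k+2`):
`(A x^k)_{a b} = ∑_{i_3,…,i_{k+2}} A_{a b i_3 … i_{k+2}} x_{i_3} ⋯ x_{i_{k+2}}`. -/
def tMat {k : ℕ} {ι : Type} [Fintype ι] (A : Tensor (k + 2) ι) (x : ι → ℝ) : Matrix ι ι ℝ :=
  Matrix.of fun a b => ∑ i : Fin k → ι, A (Fin.cons a (Fin.cons b i)) * ∏ t, x (i t)

/-- The matrix-tensor product `(RA)_{i_1 i_2 … i_k} = ∑_j R_{i_1 j} A_{j i_2 … i_k}`. -/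
def matMulT {k : ℕ} {ι : Type} [Fintype ι] (R : Matrix ι ι ℝ) (A : Tensor (k + 1) ι) :
    Tensor (k + 1) ι :=
  fun i => ∑ j : ι, R (i 0) j * A (Function.update i 0 j)

/-- The standard symplectic matrix `J = [[0, Iₙ], [-Iₙ, 0]]` of size `2n × 2n`,
with `ℝ^{2n}` realized as `Fin n ⊕ Fin n → ℝ`. -/
def sympJ (n : ℕ) : Matrix (Fin n ⊕ Fin n) (Fin n ⊕ Fin n) ℝ :=
  Matrix.fromBlocks 0 1 (-1) 0

/-- A cubical tensor `A` of even dimension is a Hamiltonian cubical tensor if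
`(Jᵀ A)^{⊤_σ} + J A = 0` for every permutation `σ`. -/
def IsHamiltonianTensor {k n : ℕ} (A : Tensor (k + 1) (Fin n ⊕ Fin n)) : Prop :=
  ∀ σ : Equiv.Perm (Fin (k + 1)),
    tTranspose σ (matMulT (sympJ n)ᵀ A) + matMulT (sympJ n) A = 0

/-! Each `Jᵀ Aᵢ` is supersymmetric, and for a supersymmetric `S` of order `k + 1` Euler's identity
reads `∇(S x^{k+1}) = (k + 1) S x^k`: the `k + 1` partial products in the derivative all agree once
the differentiated slot is permuted to the front. Hence `H(x) = ∑ᵢ (i + 2)⁻¹ (Jᵀ Aᵢ) x^{i+2}` has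
`∇H = ∑ᵢ Jᵀ Aᵢ x^{i+1}`, and `J Jᵀ = 1` gives `J ∇H = ∑ᵢ Aᵢ x^{i+1}`. -/

lemma sympJ_mul_transpose (n : ℕ) : sympJ n * (sympJ n)ᵀ = 1 := by
  simp [sympJ, fromBlocks_transpose, fromBlocks_multiply, ← fromBlocks_one]

section TensorVector

variable {k : ℕ} {ι : Type} [Fintype ι]

lemma tVec_smul (c : ℝ) (A : Tensor (k + 1) ι) (x : ι → ℝ) :
    tVec (c • A) x = c • tVec A x := by
  funext a
  simp only [tVec, Pi.smul_apply, smul_eq_mul, mul_sum, mul_assoc]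

lemma mulVec_tVec (R : Matrix ι ι ℝ) (A : Tensor (k + 1) ι) (x : ι → ℝ) :
    R *ᵥ tVec A x = tVec (matMulT R A) x := by
  funext a
  simp only [mulVec, dotProduct, tVec, matMulT, mul_sum, sum_mul, Fin.cons_zero,
    Fin.update_cons_zero, mul_assoc]
  exact sum_comm

lemma tVec_dotProduct (A : Tensor (k + 1) ι) (x v : ι → ℝ) :
    tVec A x ⬝ᵥ v = ∑ i : Fin (k + 1) → ι, A i * ((∏ s ∈ univ.erase 0, x (i s)) * v (i 0)) := by
  rw [← (Fin.consEquiv fun _ => ι).sum_comp, Fintype.sum_prod_type]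
  refine sum_congr rfl fun a _ => ?_
  simp only [tVec, Fin.univ_succ, erase_cons, prod_map, sum_mul]
  exact sum_congr rfl fun j _ => mul_assoc _ _ _

end TensorVector

namespace IsSupersymmetric

variable {k : ℕ} {ι : Type} {S : Tensor k ι}

lemma smul (hS : IsSupersymmetric S) (c : ℝ) : IsSupersymmetric (c • S) := fun σ => by
  rw [show tTranspose σ (c • S) = c • tTranspose σ S from rfl, hS σ]

lemma sum_mul_comp [Fintype ι] (hS : IsSupersymmetric S) (σ : Equiv.Perm (Fin k))
    (F : (Fin k → ι) → ℝ) : ∑ i, S i * F (i ∘ σ) = ∑ i, S i * F i := by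
  rw [← (σ.arrowCongr (Equiv.refl ι)).sum_comp]
  refine sum_congr rfl fun i _ => ?_
  change tTranspose σ.symm S i * F (i ∘ σ.symm ∘ σ) = S i * F i
  rw [hS, σ.symm_comp_self, Function.comp_id]

lemma tVec_dotProduct {S : Tensor (k + 1) ι} [Fintype ι] (hS : IsSupersymmetric S)
    (x v : ι → ℝ) (t : Fin (k + 1)) :
    tVec S x ⬝ᵥ v = ∑ i : Fin (k + 1) → ι, S i * ((∏ s ∈ univ.erase t, x (i s)) * v (i t)) := by
  have h_erase : (univ.erase t).map (Equiv.swap 0 t).toEmbedding = univ.erase 0 := by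
    rw [map_erase, map_univ_equiv, Equiv.coe_toEmbedding, Equiv.swap_apply_right]
  rw [_root_.tVec_dotProduct, ← hS.sum_mul_comp (Equiv.swap 0 t)
    (fun i => (∏ s ∈ univ.erase 0, x (i s)) * v (i 0)), ← h_erase]
  simp only [prod_map, Equiv.coe_toEmbedding, Function.comp_apply, Equiv.swap_apply_self,
    Equiv.swap_apply_left]

end IsSupersymmetric

lemma IsHamiltonianTensor.isSupersymmetric_transpose_mul {k n : ℕ}
    {A : Tensor (k + 1) (Fin n ⊕ Fin n)} (hA : IsHamiltonianTensor A) :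
    IsSupersymmetric (matMulT (sympJ n)ᵀ A) := fun σ =>
  (eq_neg_of_add_eq_zero_left (hA σ)).trans (eq_neg_of_add_eq_zero_left (hA 1)).symm

lemma HasGradientAt.fun_sum {F : Type*} [NormedAddCommGroup F] [InnerProductSpace ℝ F]
    [CompleteSpace F] {κ : Type*} {s : Finset κ} {f : κ → F → ℝ} {g : κ → F} {x : F}
    (h : ∀ i ∈ s, HasGradientAt (f i) (g i) x) :
    HasGradientAt (fun w => ∑ i ∈ s, f i w) (∑ i ∈ s, g i) x := by
  simp only [hasGradientAt_iff_hasFDerivAt, map_sum] at h ⊢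
  exact HasFDerivAt.fun_sum h

section Gradient

variable {k : ℕ} {ι : Type} [Fintype ι]

lemma hasFDerivAt_tPow (S : Tensor k ι) (x : EuclideanSpace ℝ ι) :
    HasFDerivAt (fun w : EuclideanSpace ℝ ι => tPow S w)
      (∑ i : Fin k → ι, S i •
        ∑ t, (∏ s ∈ univ.erase t, x (i s)) • EuclideanSpace.proj (𝕜 := ℝ) (i t)) x :=
  HasFDerivAt.fun_sum fun i _ =>
    (HasFDerivAt.finsetProd fun t _ =>
      (EuclideanSpace.proj (i t) : EuclideanSpace ℝ ι →L[ℝ] ℝ).hasFDerivAt).const_mul (S i)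

lemma IsSupersymmetric.hasGradientAt_tPow {S : Tensor (k + 1) ι} (hS : IsSupersymmetric S)
    (x : EuclideanSpace ℝ ι) :
    HasGradientAt (fun w : EuclideanSpace ℝ ι => tPow S w)
      (WithLp.toLp 2 (((k : ℝ) + 1) • tVec S x)) x := by
  rw [hasGradientAt_iff_hasFDerivAt]
  refine (hasFDerivAt_tPow S x).congr_fderiv (ContinuousLinearMap.ext fun v => ?_)
  simp only [InnerProductSpace.toDual_apply_apply, EuclideanSpace.inner_eq_star_dotProduct,
    _root_.sum_apply, _root_.smul_apply, PiLp.proj_apply, smul_eq_mul, mul_sum, star_trivial,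
    dotProduct_comm v.ofLp, smul_dotProduct]
  rw [sum_comm]
  simp only [← hS.tVec_dotProduct, sum_const, card_univ, Fintype.card_fin, nsmul_eq_mul,
    Nat.cast_succ]

end Gradient

/-- if all the system tensors `A_i` (of order `i + 2` for `i = 0, …, m`,
i.e. of orders `2, …, m + 2`, and dimension `2n`) are Hamiltonian cubical tensors, then
the polynomial system `ẋ = ∑ᵢ Aᵢ x^{i+1}` is a Hamiltonian system: there are
supersymmetric tensors `B_i` such that, with `H(x) = ∑ᵢ Bᵢ x^{i+2}`, the vector field
equals `J ∇H(x)` for all `x`. -/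
theorem tensor_polynomial_system_is_hamiltonian (n m : ℕ)
    (A : (i : ℕ) → Tensor (i + 2) (Fin n ⊕ Fin n))
    (hA : ∀ i ≤ m, IsHamiltonianTensor (A i)) :
    ∃ B : (i : ℕ) → Tensor (i + 2) (Fin n ⊕ Fin n),
      (∀ i ≤ m, IsSupersymmetric (B i)) ∧
      ∀ x : EuclideanSpace ℝ (Fin n ⊕ Fin n),
        ∑ i ∈ Finset.range (m + 1), tVec (A i) x =
          (sympJ n).mulVec
            (gradient (fun w : EuclideanSpace ℝ (Fin n ⊕ Fin n) =>
              ∑ i ∈ Finset.range (m + 1), tPow (B i) w) x :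
              EuclideanSpace ℝ (Fin n ⊕ Fin n)) := by
  let B : (i : ℕ) → Tensor (i + 2) (Fin n ⊕ Fin n) :=
    fun i => ((i : ℝ) + 2)⁻¹ • matMulT (sympJ n)ᵀ (A i)
  have hB : ∀ i ≤ m, IsSupersymmetric (B i) := fun i hi =>
    (hA i hi).isSupersymmetric_transpose_mul.smul _
  refine ⟨B, hB, fun x => ?_⟩
  have hH := HasGradientAt.fun_sum fun i hi =>
    (hB i (Nat.lt_succ_iff.mp (mem_range.mp hi))).hasGradientAt_tPow x
  have hB_grad (i : ℕ) :
      (((i + 1 : ℕ) : ℝ) + 1) • tVec (B i) x = (sympJ n)ᵀ *ᵥ tVec (A i) x := by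
    have hc : (((i + 1 : ℕ) : ℝ) + 1) * ((i : ℝ) + 2)⁻¹ = 1 := by
      rw [Nat.cast_succ, add_assoc, one_add_one_eq_two, mul_inv_cancel₀ (by positivity)]
    rw [tVec_smul, smul_smul, hc, one_smul, mulVec_tVec]
  rw [hH.gradient, ← WithLp.toLp_sum, WithLp.ofLp_toLp, mulVec_sum]
  simp only [hB_grad, mulVec_mulVec, sympJ_mul_transpose, one_mulVec]
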